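/- arXiv:2305.10258 — 4 statements merged into one kernel-verified Lean document; each statement's English description precedes it below -/
import Mathlib

section
/- Under the standing assumptions, C* := ⋃𝒞 is a chain of P. -/
/-- The set of strict upper bounds of a chain `C`. -/
def U {P : Type*} [PartialOrder P] (C : Set P) : Set P := {x | ∀ y ∈ C, y < x}

/-- `𝒞₀` : the set of all chains `C` of `P` satisfying condition (i-C):
for every `S ⊆ C` with `U S ⊈ U C`, one has `f (U S) ∈ C`. -/
def Cfam0 {P : Type*} [PartialOrder P] (f : Set P → P) : Set (Set P) :=
  {C | IsChain (· ≤ ·) C ∧ ∀ S ⊆ C, ¬ U S ⊆ U C → f (U S) ∈ C}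

/-- `𝒞` : the set of all `C ∈ 𝒞₀` satisfying condition (ii-C):
for every `C' ∈ 𝒞₀`, one has `C \ C' ⊆ U C'`. -/
def Cfam {P : Type*} [PartialOrder P] (f : Set P → P) : Set (Set P) :=
  {C | C ∈ Cfam0 f ∧ ∀ C' ∈ Cfam0 f, C \ C' ⊆ U C'}

theorem stmt_5_general {P : Type*} [PartialOrder P]
    (f : Set P → P) :
    IsChain (· ≤ ·) (⋃₀ Cfam f) := by
  rintro x ⟨C₁, hC₁, hx⟩ y ⟨C₂, hC₂, hy⟩ -
  by_cases hxC₂ : x ∈ C₂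
  · exact hC₂.1.1.total hxC₂ hy
  · exact Or.inr (hC₁.2 C₂ hC₂.1 ⟨hx, hxC₂⟩ y hy).le

/-- `C* := ⋃𝒞` is a chain of `P`. -/
theorem stmt_5 {P : Type*} [PartialOrder P] [Nonempty P]
    (hub : ∀ C : Set P, IsChain (· ≤ ·) C → ∃ x : P, ∀ y ∈ C, y ≤ x)
    (hnomax : ∀ m : P, ∃ x : P, m < x)
    (f : Set P → P) (hf : ∀ C : Set P, IsChain (· ≤ ·) C → f (U C) ∈ U C) :
    IsChain (· ≤ ·) (⋃₀ Cfam f) :=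
  stmt_5_general f
end

section
/- Under the standing assumptions, if S ⊆ C* := ⋃𝒞 and U_S ⊄ U_C for some C ∈ 𝒞, then S ⊆ C. -/
/-! If some `s ∈ S` lies outside `C`, then `s` lies in some `C' ∈ 𝒞`, so condition (ii-C')
applied to `C ∈ 𝒞₀` puts `s` above all of `C`; every strict upper bound of `S` is then one of
`C`, i.e. `U S ⊆ U C`. -/

theorem U_subset_U_of_mem_of_mem_U {P : Type*} [PartialOrder P] {S C : Set P} {s : P}
    (hsS : s ∈ S) (hsC : s ∈ U C) : U S ⊆ U C :=
  fun _ hx y hy => (hsC y hy).trans (hx s hsS)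

theorem mem_U_of_mem_Cfam_of_notMem {P : Type*} [PartialOrder P] {f : Set P → P}
    {C C' : Set P} (hC : C ∈ Cfam0 f) (hC' : C' ∈ Cfam f) {s : P} (hsC' : s ∈ C')
    (hsC : s ∉ C) : s ∈ U C :=
  hC'.2 C hC ⟨hsC', hsC⟩

theorem stmt_6_general {P : Type*} [PartialOrder P]
    (f : Set P → P)
    (S : Set P) (hS : S ⊆ ⋃₀ Cfam f)
    (C : Set P) (hC : C ∈ Cfam f) (hUS : ¬ U S ⊆ U C) :
    S ⊆ C := by
  intro s hsS
  by_contra hsC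
  obtain ⟨C', hC', hsC'⟩ := hS hsS
  exact hUS (U_subset_U_of_mem_of_mem_U hsS (mem_U_of_mem_Cfam_of_notMem hC.1 hC' hsC' hsC))

/-- If `S ⊆ C* := ⋃𝒞` and `U S ⊈ U C` for some `C ∈ 𝒞`, then `S ⊆ C`. -/
theorem stmt_6 {P : Type*} [PartialOrder P] [Nonempty P]
    (hub : ∀ C : Set P, IsChain (· ≤ ·) C → ∃ x : P, ∀ y ∈ C, y ≤ x)
    (hnomax : ∀ m : P, ∃ x : P, m < x)
    (f : Set P → P) (hf : ∀ C : Set P, IsChain (· ≤ ·) C → f (U C) ∈ U C)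
    (S : Set P) (hS : S ⊆ ⋃₀ Cfam f)
    (C : Set P) (hC : C ∈ Cfam f) (hUS : ¬ U S ⊆ U C) :
    S ⊆ C :=
  stmt_6_general f S hS C hC hUS
end

section
/- Under the standing assumptions, C* := ⋃𝒞 satisfies condition (i): for every S ⊆ C* with U_S ⊄ U_{C*}, one has f(U_S) ∈ C*. -/
/-!
If `U S ⊄ U C*`, some single `C₀ ∈ 𝒞` already has `U S ⊄ U C₀`. By (ii), every point of
`C* \ C₀` lies strictly above all of `C₀`, and a point of `S` strictly above all of `C₀` would
force `U S ⊆ U C₀`. Hence `S ⊆ C₀`, and (i-C₀) puts `f (U S)` into `C₀ ⊆ C*`.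
-/

section

variable {P : Type*} [PartialOrder P]

theorem U_sUnion (𝒜 : Set (Set P)) : U (⋃₀ 𝒜) = ⋂ C ∈ 𝒜, U C := by
  ext x
  simp only [U, Set.mem_sUnion, Set.mem_iInter, Set.mem_ofPred_eq]
  grind

theorem subset_of_diff_subset_U {S C : Set P} (hdiff : S \ C ⊆ U C) (hU : ¬ U S ⊆ U C) :
    S ⊆ C := by
  obtain ⟨z, hzS, hzC⟩ := Set.not_subset.mp hU
  simp only [U, Set.mem_ofPred_eq, not_forall] at hzC
  obtain ⟨c, hc, hcz⟩ := hzC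
  intro s hs
  by_contra hsC
  exact hcz ((hdiff ⟨hs, hsC⟩ c hc).trans (hzS s hs))

theorem sUnion_Cfam_diff_subset_U {f : Set P → P} {C : Set P} (hC : C ∈ Cfam0 f) :
    ⋃₀ Cfam f \ C ⊆ U C := by
  rintro x ⟨⟨D, hD, hxD⟩, hxC⟩
  exact hD.2 C hC ⟨hxD, hxC⟩

end

theorem stmt_7_general {P : Type*} [PartialOrder P]
    (f : Set P → P) :
    ∀ S ⊆ ⋃₀ Cfam f, ¬ U S ⊆ U (⋃₀ Cfam f) → f (U S) ∈ ⋃₀ Cfam f := by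
  intro S hS hUS
  rw [U_sUnion, Set.subset_iInter₂_iff] at hUS
  push Not at hUS
  obtain ⟨C₀, hC₀, hUSC₀⟩ := hUS
  have hSC₀ : S ⊆ C₀ := subset_of_diff_subset_U
    ((Set.sdiff_subset_sdiff_left hS).trans (sUnion_Cfam_diff_subset_U hC₀.1)) hUSC₀
  exact ⟨C₀, hC₀, hC₀.1.2 S hSC₀ hUSC₀⟩

/-- `C* := ⋃𝒞` satisfies condition (i): for every `S ⊆ C*` with `U S ⊈ U C*`,
one has `f (U S) ∈ C*`. -/
theorem stmt_7 {P : Type*} [PartialOrder P] [Nonempty P]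
    (hub : ∀ C : Set P, IsChain (· ≤ ·) C → ∃ x : P, ∀ y ∈ C, y ≤ x)
    (hnomax : ∀ m : P, ∃ x : P, m < x)
    (f : Set P → P) (hf : ∀ C : Set P, IsChain (· ≤ ·) C → f (U C) ∈ U C) :
    ∀ S ⊆ ⋃₀ Cfam f, ¬ U S ⊆ U (⋃₀ Cfam f) → f (U S) ∈ ⋃₀ Cfam f :=
  stmt_7_general f
end

section
/- Under the standing assumptions, setting u := f(U_{C*}) and C** := C* ∪ {u}, the chain C** satisfies condition (i): for every S ⊆ C** with U_S ⊄ U_{C**}, one has f(U_S) ∈ C**; in particular C** ∈ 𝒞₀. -/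
section UpperBounds

variable {P : Type*} [PartialOrder P]

theorem U_antitone : Antitone (U : Set P → Set P) :=
  fun _ _ hST _ hx y hy => hx y (hST hy)

theorem U_subset_U_union_singleton {C S : Set P} {u : P} (hu : u ∈ U C) (huS : u ∈ S) :
    U S ⊆ U (C ∪ {u}) := by
  intro x hx y hy
  rcases hy with hyC | rfl
  · exact (hu y hyC).trans (hx u huS)
  · exact hx y huS

theorem isChain_union_singleton_of_mem_U {C : Set P} {u : P} (hC : IsChain (· ≤ ·) C)
    (hu : u ∈ U C) : IsChain (· ≤ ·) (C ∪ {u}) := by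
  rw [Set.union_singleton]
  exact hC.insert fun b hb _ => Or.inr (hu b hb).le

end UpperBounds

section Chains

variable {P : Type*} [PartialOrder P] {f : Set P → P}

theorem union_singleton_mem_Cfam0 {C : Set P} (hC : C ∈ Cfam0 f) (hu : f (U C) ∈ U C) :
    C ∪ {f (U C)} ∈ Cfam0 f := by
  refine ⟨isChain_union_singleton_of_mem_U hC.1 hu, fun S hS hUS => ?_⟩
  have huS : f (U C) ∉ S := fun huS => hUS (U_subset_U_union_singleton hu huS)
  have hSC : S ⊆ C := fun s hs =>
    (hS hs).resolve_right fun hsu => huS (Set.mem_singleton_iff.mp hsu ▸ hs)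
  by_cases hsub : U S ⊆ U C
  · right
    rw [Set.mem_singleton_iff, hsub.antisymm (U_antitone hSC)]
  · exact Or.inl (hC.2 S hSC hsub)

theorem isChain_sUnion_Cfam : IsChain (· ≤ ·) (⋃₀ Cfam f) := by
  rintro x ⟨C, hC, hxC⟩ y ⟨C', hC', hyC'⟩ hxy
  by_cases hxC' : x ∈ C'
  · exact hC'.1.1 hxC' hyC' hxy
  · exact Or.inr (hC.2 C' hC'.1 ⟨hxC, hxC'⟩ y hyC').le

theorem sUnion_Cfam_mem_Cfam0 : ⋃₀ Cfam f ∈ Cfam0 f := by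
  refine ⟨isChain_sUnion_Cfam, fun S hS hUS => ?_⟩
  obtain ⟨z, hzS, hz⟩ := Set.not_subset.mp hUS
  obtain ⟨c, ⟨C₀, hC₀, hcC₀⟩, hcz⟩ : ∃ c ∈ ⋃₀ Cfam f, ¬ c < z := by
    by_contra! h
    exact hz h
  have hSC₀ : S ⊆ C₀ := by
    intro s hs
    by_contra hsC₀
    obtain ⟨C', hC', hsC'⟩ := hS hs
    exact hcz ((hC'.2 C₀ hC₀.1 ⟨hsC', hsC₀⟩ c hcC₀).trans (hzS s hs))
  have hUSC₀ : ¬ U S ⊆ U C₀ := fun hsub => hcz (hsub hzS c hcC₀)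
  exact ⟨C₀, hC₀, hC₀.1.2 S hSC₀ hUSC₀⟩

end Chains

theorem stmt_10_general {P : Type*} [PartialOrder P]
    (f : Set P → P) (hf : ∀ C : Set P, IsChain (· ≤ ·) C → f (U C) ∈ U C) :
    (∀ S ⊆ ⋃₀ Cfam f ∪ {f (U (⋃₀ Cfam f))},
        ¬ U S ⊆ U (⋃₀ Cfam f ∪ {f (U (⋃₀ Cfam f))}) →
        f (U S) ∈ ⋃₀ Cfam f ∪ {f (U (⋃₀ Cfam f))}) ∧
      ⋃₀ Cfam f ∪ {f (U (⋃₀ Cfam f))} ∈ Cfam0 f := by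
  have hCss : ⋃₀ Cfam f ∪ {f (U (⋃₀ Cfam f))} ∈ Cfam0 f :=
    union_singleton_mem_Cfam0 sUnion_Cfam_mem_Cfam0 (hf _ isChain_sUnion_Cfam)
  exact ⟨hCss.2, hCss⟩

/-- With `u := f (U C*)` and `C** := C* ∪ {u}`, the chain `C**` satisfies
condition (i): for every `S ⊆ C**` with `U S ⊈ U C**`, one has `f (U S) ∈ C**`;
in particular `C** ∈ 𝒞₀`. -/
theorem stmt_10 {P : Type*} [PartialOrder P] [Nonempty P]
    (hub : ∀ C : Set P, IsChain (· ≤ ·) C → ∃ x : P, ∀ y ∈ C, y ≤ x)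
    (hnomax : ∀ m : P, ∃ x : P, m < x)
    (f : Set P → P) (hf : ∀ C : Set P, IsChain (· ≤ ·) C → f (U C) ∈ U C) :
    (∀ S ⊆ ⋃₀ Cfam f ∪ {f (U (⋃₀ Cfam f))},
        ¬ U S ⊆ U (⋃₀ Cfam f ∪ {f (U (⋃₀ Cfam f))}) →
        f (U S) ∈ ⋃₀ Cfam f ∪ {f (U (⋃₀ Cfam f))}) ∧
      ⋃₀ Cfam f ∪ {f (U (⋃₀ Cfam f))} ∈ Cfam0 f :=
  stmt_10_general f hf
end
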